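/- Let T > 0 and let ρ : ℝ^d × [0,T] → (0,∞) be a C¹ function such that for every t ∈ [0,T] the function ρ(·,t) is a probability density on ℝ^d and ρ(·,t) log ρ(·,t) is Lebesgue integrable. Let v : ℝ^d × [0,T] → ℝ^d be a C¹ vector field such that there is a compact set K ⊆ ℝ^d with v(x,t) = 0 for all x ∉ K and all t ∈ [0,T]. Assume the continuity equation ∂_t ρ(x,t) + div_x(ρ(x,t) v(x,t)) = 0 holds pointwise on ℝ^d × [0,T], and that there exists a Lebesgue-integrable function g on ℝ^d with |∂_t ρ(x,t)| · (1 + |log ρ(x,t)|) ≤ g(x) for all (x,t). Then H(ρ(·,T)) − H(ρ(·,0)) = ∫₀ᵀ ∫_{ℝ^d} ∇_x ρ(x,t) · v(x,t) dx dt. Equivalently, setting u(x,t) = ∇_x ρ(x,t) / (2 ρ(x,t)), one has ∫₀ᵀ ∫_{ℝ^d} |u + v|²(x,t) ρ(x,t) dx dt = ∫₀ᵀ ∫_{ℝ^d} (|u|² + |v|²)(x,t) ρ(x,t) dx dt + H(ρ(·,T)) − H(ρ(·,0)). -/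

import Mathlib

/-!
By the fundamental theorem of calculus in time and Fubini (justified by the domination by `g`),
`H(ρ(·,T)) - H(ρ(·,0)) = ∫₀ᵀ ∫ ∂ₜρ (log ρ + 1)`. At each time the continuity equation replaces
`∂ₜρ` by `-div(ρ v)`, and since `ρ v` has compact support, integrating by parts against
`log ρ + 1`, whose gradient is `∇ρ / ρ`, gives `∫ ∇ρ · v`.

The second identity is the pointwise expansion `|u + v|² ρ = (|u|² + |v|²) ρ + ∇ρ · v` integrated
over `[0,T] × ℝ^d`. The cross term is continuous with support in `[0,T] × K`, hence integrable,
so the identity survives in `EReal` even when both sides are infinite.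
-/

open MeasureTheory Set
open scoped ENNReal

theorem ContinuousOn.comp_swap {X Y Z : Type*} [TopologicalSpace X] [TopologicalSpace Y]
    [TopologicalSpace Z] {f : X × Y → Z} {s : Set X} {t : Set Y} (hf : ContinuousOn f (s ×ˢ t)) :
    ContinuousOn (fun p : Y × X => f (p.2, p.1)) (t ×ˢ s) :=
  hf.comp continuous_swap.continuousOn fun _ hp => ⟨hp.2, hp.1⟩

namespace ContDiffOn

variable {E F : Type*} [NormedAddCommGroup E] [NormedSpace ℝ E]
  [NormedAddCommGroup F] [NormedSpace ℝ F] {f : E × ℝ → F} {I : Set ℝ} {t : ℝ}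

theorem contDiff_slice {n : WithTop ℕ∞} (hf : ContDiffOn ℝ n f (univ ×ˢ I)) (ht : t ∈ I) :
    ContDiff ℝ n (fun y => f (y, t)) :=
  contDiffOn_univ.mp <| hf.comp (contDiff_id.prodMk contDiff_const).contDiffOn
    fun y _ => ⟨mem_univ y, ht⟩

theorem hasFDerivAt_slice (hf : ContDiffOn ℝ 1 f (univ ×ˢ I)) (ht : t ∈ I) (x : E) :
    HasFDerivAt (fun y => f (y, t))
      ((fderivWithin ℝ f (univ ×ˢ I) (x, t)).comp (ContinuousLinearMap.inl ℝ E ℝ)) x := by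
  have hfx := (hf.differentiableOn one_ne_zero (x, t) ⟨mem_univ x, ht⟩).hasFDerivWithinAt
  refine (hfx.comp x (hasFDerivAt_prodMk_left x t).hasFDerivWithinAt ?_).hasFDerivAt
    Filter.univ_mem
  exact fun y _ => ⟨mem_univ y, ht⟩

theorem hasDerivWithinAt_slice (hf : ContDiffOn ℝ 1 f (univ ×ˢ I)) (ht : t ∈ I) (x : E) :
    HasDerivWithinAt (fun s => f (x, s)) (fderivWithin ℝ f (univ ×ˢ I) (x, t) (0, 1)) I t := by
  have hfx := (hf.differentiableOn one_ne_zero (x, t) ⟨mem_univ x, ht⟩).hasFDerivWithinAt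
  exact hfx.comp_hasDerivWithinAt t
    ((hasDerivAt_const t x).prodMk (hasDerivAt_id t)).hasDerivWithinAt fun s hs => ⟨mem_univ x, hs⟩

theorem continuousOn_fderivWithin_comp_swap (hf : ContDiffOn ℝ 1 f (univ ×ˢ I))
    (hI : UniqueDiffOn ℝ I) :
    ContinuousOn (fun p : ℝ × E => fderivWithin ℝ f (univ ×ˢ I) (p.2, p.1)) (I ×ˢ univ) :=
  (hf.continuousOn_fderivWithin (uniqueDiffOn_univ.prod hI) le_rfl).comp_swap

theorem continuousOn_fderiv_slice (hf : ContDiffOn ℝ 1 f (univ ×ˢ I)) (hI : UniqueDiffOn ℝ I) :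
    ContinuousOn (fun p : ℝ × E => fderiv ℝ (fun y => f (y, p.1)) p.2) (I ×ˢ univ) :=
  ((hf.continuousOn_fderivWithin_comp_swap hI).clm_comp continuousOn_const).congr
    fun p hp => (hf.hasFDerivAt_slice hp.1 p.2).fderiv

theorem continuousOn_derivWithin_slice (hf : ContDiffOn ℝ 1 f (univ ×ˢ I))
    (hI : UniqueDiffOn ℝ I) :
    ContinuousOn (fun p : ℝ × E => derivWithin (fun s => f (p.2, s)) I p.1) (I ×ˢ univ) :=
  ((hf.continuousOn_fderivWithin_comp_swap hI).clm_apply continuousOn_const).congr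
    fun p hp => (hf.hasDerivWithinAt_slice hp.1 p.2).derivWithin (hI p.1 hp.1)

end ContDiffOn

theorem integral_Icc_deriv_mul_log_add_one {φ φ' : ℝ → ℝ} {a b : ℝ} (hab : a ≤ b)
    (hφ : ∀ t ∈ Icc a b, HasDerivWithinAt φ (φ' t) (Icc a b) t)
    (hφ' : ContinuousOn φ' (Icc a b)) (hpos : ∀ t ∈ Icc a b, 0 < φ t) :
    ∫ t in Icc a b, φ' t * (Real.log (φ t) + 1) = φ b * Real.log (φ b) - φ a * Real.log (φ a) := by
  have hne : ∀ t ∈ Icc a b, φ t ≠ 0 := fun t ht => (hpos t ht).ne'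
  have hcont : ContinuousOn φ (Icc a b) := fun t ht => (hφ t ht).continuousWithinAt
  rw [integral_Icc_eq_integral_Ioc, ← intervalIntegral.integral_of_le hab]
  refine intervalIntegral.integral_eq_sub_of_hasDeriv_right_of_le hab
    (hcont.mul (hcont.log hne)) (fun t ht => ?_) ?_
  · have hφt := (hφ t (Ioo_subset_Icc_self ht)).hasDerivAt (Icc_mem_nhds ht.1 ht.2)
    have hderiv := (Real.hasDerivAt_mul_log (hne t (Ioo_subset_Icc_self ht))).comp t hφt
    rw [mul_comm] at hderiv
    exact hderiv.hasDerivWithinAt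
  · refine ContinuousOn.intervalIntegrable ?_
    rw [uIcc_of_le hab]
    exact hφ'.mul ((hcont.log hne).add continuousOn_const)

theorem integral_mul_fderiv_eq_neg_fderiv_mul_of_hasCompactSupport {E : Type*}
    [NormedAddCommGroup E] [NormedSpace ℝ E] [FiniteDimensional ℝ E] [MeasurableSpace E]
    [BorelSpace E] {μ : Measure E} [μ.IsAddHaarMeasure] {f g : E → ℝ}
    (hf : ContDiff ℝ 1 f) (hg : ContDiff ℝ 1 g) (hfc : HasCompactSupport f) (v : E) :
    ∫ x, f x * fderiv ℝ g x v ∂μ = -∫ x, fderiv ℝ f x v * g x ∂μ := by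
  have hf' := (hf.continuous_fderiv one_ne_zero).clm_apply (continuous_const (y := v))
  have hg' := (hg.continuous_fderiv one_ne_zero).clm_apply (continuous_const (y := v))
  exact integral_mul_fderiv_eq_neg_fderiv_mul_of_integrable
    ((hf'.mul hg.continuous).integrable_of_hasCompactSupport (hfc.fderiv_apply ℝ v).mul_right)
    ((hf.continuous.mul hg').integrable_of_hasCompactSupport hfc.mul_right)
    ((hf.continuous.mul hg.continuous).integrable_of_hasCompactSupport hfc.mul_right)
    (fun x _ => hf.differentiable one_ne_zero x) (fun x _ => hg.differentiable one_ne_zero x)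

theorem integral_neg_divergence_mul_log_add_one {ι : Type*} [Fintype ι] [DecidableEq ι]
    {μ : Measure (ι → ℝ)} [μ.IsAddHaarMeasure] {f : (ι → ℝ) → ℝ} {w : (ι → ℝ) → ι → ℝ}
    (hf : ContDiff ℝ 1 f) (hpos : ∀ x, 0 < f x) (hw : ContDiff ℝ 1 w) (hwc : HasCompactSupport w) :
    ∫ x, -(∑ i, fderiv ℝ (fun y => f y * w y i) x (Pi.single i 1)) * (Real.log (f x) + 1) ∂μ
      = ∫ x, ∑ i, fderiv ℝ f x (Pi.single i 1) * w x i ∂μ := by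
  set L : (ι → ℝ) → ℝ := fun y => Real.log (f y) + 1
  have hL : ContDiff ℝ 1 L := (hf.log fun x => (hpos x).ne').add contDiff_const
  have hL' (x : ι → ℝ) : fderiv ℝ L x = (f x)⁻¹ • fderiv ℝ f x :=
    (((Real.hasDerivAt_log (hpos x).ne').comp_hasFDerivAt x
      (hf.differentiable one_ne_zero x).hasFDerivAt).add_const 1).fderiv
  have hwi (i : ι) : ContDiff ℝ 1 (fun y => w y i) := contDiff_pi.mp hw i
  have hwic (i : ι) : HasCompactSupport (fun y => w y i) :=
    hwc.comp_left (g := fun z : ι → ℝ => z i) rfl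
  have hterm (i : ι) : ∫ x, fderiv ℝ f x (Pi.single i 1) * w x i ∂μ
      = -∫ x, fderiv ℝ (fun y => f y * w y i) x (Pi.single i 1) * L x ∂μ := by
    rw [← integral_mul_fderiv_eq_neg_fderiv_mul_of_hasCompactSupport (hf.mul (hwi i)) hL
      (hwic i).mul_left]
    refine integral_congr_ae (Filter.Eventually.of_forall fun x => ?_)
    simp only [hL', smul_apply, smul_eq_mul]
    field_simp [(hpos x).ne']
  have hint (i : ι) : Integrable (fun x => fderiv ℝ f x (Pi.single i 1) * w x i) μ :=
    (((hf.continuous_fderiv one_ne_zero).clm_apply continuous_const).mul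
      (hwi i).continuous).integrable_of_hasCompactSupport (hwic i).mul_left
  have hint' (i : ι) :
      Integrable (fun x => fderiv ℝ (fun y => f y * w y i) x (Pi.single i 1) * L x) μ :=
    ((((hf.mul (hwi i)).continuous_fderiv one_ne_zero).clm_apply continuous_const).mul
      hL.continuous).integrable_of_hasCompactSupport
        (((hwic i).mul_left.fderiv_apply ℝ _).mul_right)
  simp only [neg_mul, Finset.sum_mul, integral_neg, integral_finsetSum _ fun i _ => hint i,
    hterm, Finset.sum_neg_distrib]
  exact congrArg Neg.neg (integral_finsetSum _ fun i _ => hint' i)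

theorem ae_restrict_prod_of_forall_mem {E : Type*} [MeasurableSpace E] {μ : Measure E}
    [SFinite μ] {I : Set ℝ} (hI : MeasurableSet I) {P : ℝ × E → Prop}
    (h : ∀ p ∈ I ×ˢ univ, P p) : ∀ᵐ p ∂(volume.restrict I).prod μ, P p := by
  rw [Measure.restrict_prod_eq_prod_univ]
  exact ae_restrict_of_forall_mem (hI.prod .univ) h

theorem integrable_restrict_prod_of_norm_le {E : Type*} [MeasurableSpace E] {μ : Measure E}
    [SFinite μ] {I : Set ℝ} (hI : IsCompact I) {F : ℝ × E → ℝ} {g : E → ℝ}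
    (hF : AEStronglyMeasurable F ((volume.restrict I).prod μ)) (hg : Integrable g μ)
    (hFg : ∀ p ∈ I ×ˢ univ, ‖F p‖ ≤ g p.2) : Integrable F ((volume.restrict I).prod μ) := by
  have : IsFiniteMeasure (volume.restrict I) :=
    isFiniteMeasure_restrict.mpr hI.measure_lt_top.ne
  refine ((integrable_const (1 : ℝ)).mul_prod hg).mono' hF ?_
  exact ae_restrict_prod_of_forall_mem hI.measurableSet fun p hp => by simpa using hFg p hp

section Strip

variable {E : Type*} [TopologicalSpace E] [SecondCountableTopology E] [MeasurableSpace E]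
  [BorelSpace E] {μ : Measure E} {I : Set ℝ} {F : ℝ × E → ℝ}

theorem ContinuousOn.aestronglyMeasurable_restrict_prod [SFinite μ] (hI : MeasurableSet I)
    (hF : ContinuousOn F (I ×ˢ univ)) : AEStronglyMeasurable F ((volume.restrict I).prod μ) := by
  rw [Measure.restrict_prod_eq_prod_univ]
  exact hF.aestronglyMeasurable (hI.prod .univ)

theorem integrable_restrict_prod_of_continuousOn [T2Space E] [SFinite μ]
    [IsFiniteMeasureOnCompacts μ] (hI : IsCompact I) {K : Set E} (hK : IsCompact K)
    (hF : ContinuousOn F (I ×ˢ univ)) (hFK : ∀ p ∈ I ×ˢ univ, p.2 ∉ K → F p = 0) :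
    Integrable F ((volume.restrict I).prod μ) := by
  rw [Measure.restrict_prod_eq_prod_univ, ← IntegrableOn]
  exact ((hF.mono (prod_mono subset_rfl (subset_univ K))).integrableOn_compact (hI.prod hK))
    |>.of_forall_sdiff_eq_zero (hI.measurableSet.prod .univ)
      fun p hp => hFK p hp.1 fun hpK => hp.2 ⟨hp.1.1, hpK⟩

end Strip

theorem coe_lintegral_ofReal_eq_add_integral {α : Type*} [MeasurableSpace α] {μ : Measure α}
    {a b c : α → ℝ} (hb : AEStronglyMeasurable b μ) (hc : Integrable c μ) (ha₀ : 0 ≤ᵐ[μ] a)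
    (hb₀ : 0 ≤ᵐ[μ] b) (habc : a =ᵐ[μ] b + c) :
    ((∫⁻ x, ENNReal.ofReal (a x) ∂μ : ℝ≥0∞) : EReal)
      = (∫⁻ x, ENNReal.ofReal (b x) ∂μ : ℝ≥0∞) + ((∫ x, c x ∂μ : ℝ) : EReal) := by
  by_cases hB : ∫⁻ x, ENNReal.ofReal (b x) ∂μ = ∞
  · have hle : ∫⁻ x, ENNReal.ofReal (b x) ∂μ
        ≤ ∫⁻ x, ENNReal.ofReal (a x) ∂μ + ∫⁻ x, ‖c x‖ₑ ∂μ := by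
      rw [← lintegral_add_right' _ hc.1.enorm]
      refine lintegral_mono_ae (habc.mono fun x hx => ?_)
      calc ENNReal.ofReal (b x) = ENNReal.ofReal (a x + -c x) := by simp [hx]
        _ ≤ ENNReal.ofReal (a x) + ENNReal.ofReal (-c x) := ENNReal.ofReal_add_le
        _ ≤ ENNReal.ofReal (a x) + ‖c x‖ₑ := by
          gcongr; exact (Real.ofReal_le_enorm _).trans_eq (enorm_neg _)
    have hA : ∫⁻ x, ENNReal.ofReal (a x) ∂μ = ∞ := by
      by_contra hA
      exact (hB ▸ hle).not_gt (ENNReal.add_lt_top.mpr ⟨lt_top_iff_ne_top.mpr hA, hc.2⟩)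
    rw [hA, hB, EReal.coe_ennreal_top, EReal.top_add_coe]
  · have hb_int : Integrable b μ :=
      ⟨hb, (hasFiniteIntegral_iff_ofReal hb₀).mpr (lt_top_iff_ne_top.mpr hB)⟩
    have ha_int : Integrable a μ := (hb_int.add hc).congr habc.symm
    rw [← ofReal_integral_eq_lintegral_ofReal ha_int ha₀,
      ← ofReal_integral_eq_lintegral_ofReal hb_int hb₀, EReal.coe_ennreal_ofReal,
      EReal.coe_ennreal_ofReal, max_eq_left (integral_nonneg_of_ae ha₀),
      max_eq_left (integral_nonneg_of_ae hb₀), integral_congr_ae habc, integral_add' hb_int hc,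
      EReal.coe_add]

theorem EReal.add_coe_sub (x : EReal) (p q : ℝ) : x + ((p - q : ℝ) : EReal) = x + p - q := by
  rw [EReal.coe_sub, sub_eq_add_neg, sub_eq_add_neg, add_assoc]

theorem integral_mul_log_sub_eq_integral_derivWithin {E : Type*} [NormedAddCommGroup E]
    [NormedSpace ℝ E] [SecondCountableTopology E] [MeasurableSpace E] [BorelSpace E]
    {μ : Measure E} [SFinite μ] {ρ : E × ℝ → ℝ} {T : ℝ} (hT : 0 < T) {g : E → ℝ}
    (hρ : ContDiffOn ℝ 1 ρ (univ ×ˢ Icc 0 T))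
    (hpos : ∀ x, ∀ t ∈ Icc 0 T, 0 < ρ (x, t))
    (hent₀ : Integrable (fun x => ρ (x, 0) * Real.log (ρ (x, 0))) μ)
    (hentT : Integrable (fun x => ρ (x, T) * Real.log (ρ (x, T))) μ) (hg : Integrable g μ)
    (hdom : ∀ x, ∀ t ∈ Icc 0 T,
      |derivWithin (fun s => ρ (x, s)) (Icc 0 T) t| * (1 + |Real.log (ρ (x, t))|) ≤ g x) :
    ∫ x, ρ (x, T) * Real.log (ρ (x, T)) ∂μ - ∫ x, ρ (x, 0) * Real.log (ρ (x, 0)) ∂μ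
      = ∫ t in Icc 0 T, ∫ x,
          derivWithin (fun s => ρ (x, s)) (Icc 0 T) t * (Real.log (ρ (x, t)) + 1) ∂μ := by
  have hI : UniqueDiffOn ℝ (Icc 0 T) := uniqueDiffOn_Icc hT
  have hρ_t := hρ.continuousOn_derivWithin_slice hI
  set h : ℝ × E → ℝ := fun p =>
    derivWithin (fun s => ρ (p.2, s)) (Icc 0 T) p.1 * (Real.log (ρ (p.2, p.1)) + 1)
  have hh : ContinuousOn h (Icc 0 T ×ˢ univ) :=
    hρ_t.mul ((hρ.continuousOn.comp_swap.log fun p hp => (hpos p.2 p.1 hp.1).ne').add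
      continuousOn_const)
  have hh_int : Integrable h ((volume.restrict (Icc 0 T)).prod μ) := by
    refine integrable_restrict_prod_of_norm_le isCompact_Icc
      (hh.aestronglyMeasurable_restrict_prod measurableSet_Icc) hg fun p hp => ?_
    refine le_trans ?_ (hdom p.2 p.1 hp.1)
    rw [Real.norm_eq_abs, abs_mul, add_comm 1]
    gcongr
    exact (abs_add_le _ _).trans_eq (by rw [abs_one])
  have hftc (x : E) : ∫ t in Icc 0 T, h (t, x)
      = ρ (x, T) * Real.log (ρ (x, T)) - ρ (x, 0) * Real.log (ρ (x, 0)) :=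
    integral_Icc_deriv_mul_log_add_one hT.le
      (fun t ht => (hρ.hasDerivWithinAt_slice ht x).differentiableWithinAt.hasDerivWithinAt)
      (hρ_t.comp (continuous_id.prodMk continuous_const).continuousOn
        fun t ht => ⟨ht, mem_univ x⟩)
      (fun t ht => hpos x t ht)
  calc ∫ x, ρ (x, T) * Real.log (ρ (x, T)) ∂μ - ∫ x, ρ (x, 0) * Real.log (ρ (x, 0)) ∂μ
      = ∫ x, (∫ t in Icc 0 T, h (t, x)) ∂μ := by
        rw [← integral_sub hentT hent₀]
        simp_rw [hftc]
    _ = ∫ t in Icc 0 T, ∫ x, h (t, x) ∂μ := (integral_integral_swap hh_int).symm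

theorem sum_div_two_mul_add_sq_mul {ι : Type*} [Fintype ι] {r : ℝ} (hr : r ≠ 0) (g w : ι → ℝ) :
    (∑ i, (g i / (2 * r) + w i) ^ 2) * r
      = (∑ i, ((g i / (2 * r)) ^ 2 + w i ^ 2)) * r + ∑ i, g i * w i := by
  simp only [Finset.sum_mul, ← Finset.sum_add_distrib]
  refine Finset.sum_congr rfl fun i _ => ?_
  field_simp
  ring

theorem coe_lintegral_sq_add_mul_eq {ι : Type*} [Fintype ι] [DecidableEq ι]
    {μ : Measure (ι → ℝ)} [μ.IsAddHaarMeasure] {ρ : (ι → ℝ) × ℝ → ℝ} {v : (ι → ℝ) × ℝ → ι → ℝ}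
    {I : Set ℝ} {K : Set (ι → ℝ)} (hIc : IsCompact I) (hI : UniqueDiffOn ℝ I) (hK : IsCompact K)
    (hρ : ContDiffOn ℝ 1 ρ (univ ×ˢ I)) (hpos : ∀ x, ∀ t ∈ I, 0 < ρ (x, t))
    (hv : ContinuousOn v (univ ×ˢ I)) (hvK : ∀ x ∉ K, ∀ t ∈ I, v (x, t) = 0) :
    ((∫⁻ t in I, ∫⁻ x, ENNReal.ofReal
        ((∑ i, (fderiv ℝ (fun y => ρ (y, t)) x (Pi.single i 1) / (2 * ρ (x, t))
          + v (x, t) i) ^ 2) * ρ (x, t)) ∂μ : ℝ≥0∞) : EReal)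
      = ((∫⁻ t in I, ∫⁻ x, ENNReal.ofReal
          ((∑ i, ((fderiv ℝ (fun y => ρ (y, t)) x (Pi.single i 1) / (2 * ρ (x, t))) ^ 2
            + v (x, t) i ^ 2)) * ρ (x, t)) ∂μ : ℝ≥0∞) : EReal)
        + ((∫ t in I, ∫ x, ∑ i, fderiv ℝ (fun y => ρ (y, t)) x (Pi.single i 1) * v (x, t) i ∂μ
          : ℝ) : EReal) := by
  set S : Set (ℝ × (ι → ℝ)) := I ×ˢ univ
  set u : ℝ × (ι → ℝ) → ι → ℝ := fun p i => fderiv ℝ (fun y => ρ (y, p.1)) p.2 (Pi.single i 1)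
  set a : ℝ × (ι → ℝ) → ℝ := fun p =>
    (∑ i, (u p i / (2 * ρ (p.2, p.1)) + v (p.2, p.1) i) ^ 2) * ρ (p.2, p.1)
  set b : ℝ × (ι → ℝ) → ℝ := fun p =>
    (∑ i, ((u p i / (2 * ρ (p.2, p.1))) ^ 2 + v (p.2, p.1) i ^ 2)) * ρ (p.2, p.1)
  set c : ℝ × (ι → ℝ) → ℝ := fun p => ∑ i, u p i * v (p.2, p.1) i
  have hρc : ContinuousOn (fun p : ℝ × (ι → ℝ) => ρ (p.2, p.1)) S := hρ.continuousOn.comp_swap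
  have hρ0 : ∀ p ∈ S, ρ (p.2, p.1) ≠ 0 := fun p hp => (hpos p.2 p.1 hp.1).ne'
  have huc (i : ι) : ContinuousOn (fun p => u p i) S :=
    (hρ.continuousOn_fderiv_slice hI).clm_apply continuousOn_const
  have hvc (i : ι) : ContinuousOn (fun p : ℝ × (ι → ℝ) => v (p.2, p.1) i) S :=
    (continuous_apply i).comp_continuousOn hv.comp_swap
  have hudiv (i : ι) : ContinuousOn (fun p => u p i / (2 * ρ (p.2, p.1))) S :=
    (huc i).div (continuousOn_const.mul hρc) fun p hp => mul_ne_zero two_ne_zero (hρ0 p hp)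
  have ha : ContinuousOn a S :=
    (continuousOn_finsetSum _ fun i _ => ((hudiv i).add (hvc i)).pow 2).mul hρc
  have hb : ContinuousOn b S :=
    (continuousOn_finsetSum _ fun i _ => ((hudiv i).pow 2).add ((hvc i).pow 2)).mul hρc
  have hc : Integrable c ((volume.restrict I).prod μ) :=
    integrable_restrict_prod_of_continuousOn hIc hK
      (continuousOn_finsetSum _ fun i _ => (huc i).mul (hvc i))
      fun p hp hpK => Finset.sum_eq_zero fun i _ => by simp [hvK p.2 hpK p.1 hp.1]
  have hae {P : ℝ × (ι → ℝ) → Prop} (h : ∀ p ∈ S, P p) :=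
    ae_restrict_prod_of_forall_mem (μ := μ) hIc.measurableSet h
  have key := coe_lintegral_ofReal_eq_add_integral
    (hb.aestronglyMeasurable_restrict_prod hIc.measurableSet) hc
    (hae fun p hp => mul_nonneg (Finset.sum_nonneg fun i _ => by positivity) (hpos _ _ hp.1).le)
    (hae fun p hp => mul_nonneg (Finset.sum_nonneg fun i _ => by positivity) (hpos _ _ hp.1).le)
    (hae fun p hp => sum_div_two_mul_add_sq_mul (hρ0 p hp) (u p) (fun i => v (p.2, p.1) i))
  rwa [lintegral_prod _
      (ha.aestronglyMeasurable_restrict_prod hIc.measurableSet).aemeasurable.ennreal_ofReal,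
    lintegral_prod _
      (hb.aestronglyMeasurable_restrict_prod hIc.measurableSet).aemeasurable.ennreal_ofReal,
    integral_prod _ hc] at key

theorem entropy_integration_by_parts_general
    (d : ℕ) (T : ℝ) (hT : 0 < T)
    (ρ : (Fin d → ℝ) × ℝ → ℝ) (v : (Fin d → ℝ) × ℝ → (Fin d → ℝ))
    (hρC1 : ContDiffOn ℝ 1 ρ (Set.univ ×ˢ Set.Icc 0 T))
    (hρpos : ∀ (x : Fin d → ℝ), ∀ t ∈ Set.Icc (0:ℝ) T, 0 < ρ (x, t))
    (hent : ∀ t ∈ Set.Icc (0:ℝ) T, Integrable (fun x => ρ (x, t) * Real.log (ρ (x, t))))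
    (hvC1 : ContDiffOn ℝ 1 v (Set.univ ×ˢ Set.Icc 0 T))
    (hvK : ∃ K : Set (Fin d → ℝ), IsCompact K ∧
      ∀ x ∉ K, ∀ t ∈ Set.Icc (0:ℝ) T, v (x, t) = 0)
    (hcont : ∀ (x : Fin d → ℝ), ∀ t ∈ Set.Icc (0:ℝ) T,
      derivWithin (fun s => ρ (x, s)) (Set.Icc 0 T) t
        + ∑ i, fderiv ℝ (fun y => ρ (y, t) * v (y, t) i) x (Pi.single i 1) = 0)
    (hdom : ∃ g : (Fin d → ℝ) → ℝ, Integrable g ∧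
      ∀ (x : Fin d → ℝ), ∀ t ∈ Set.Icc (0:ℝ) T,
        |derivWithin (fun s => ρ (x, s)) (Set.Icc 0 T) t| * (1 + |Real.log (ρ (x, t))|)
          ≤ g x) :
    ((∫ x, ρ (x, T) * Real.log (ρ (x, T))) - ∫ x, ρ (x, 0) * Real.log (ρ (x, 0))
        = ∫ t in Set.Icc (0:ℝ) T,
            ∫ x, ∑ i, fderiv ℝ (fun y => ρ (y, t)) x (Pi.single i 1) * v (x, t) i)
    ∧ (((∫⁻ t in Set.Icc (0:ℝ) T, ∫⁻ x, ENNReal.ofReal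
            ((∑ i, (fderiv ℝ (fun y => ρ (y, t)) x (Pi.single i 1) / (2 * ρ (x, t))
                + v (x, t) i) ^ 2) * ρ (x, t)) : ℝ≥0∞) : EReal)
        = ((∫⁻ t in Set.Icc (0:ℝ) T, ∫⁻ x, ENNReal.ofReal
            ((∑ i, ((fderiv ℝ (fun y => ρ (y, t)) x (Pi.single i 1) / (2 * ρ (x, t))) ^ 2
                + v (x, t) i ^ 2)) * ρ (x, t)) : ℝ≥0∞) : EReal)
          + ((∫ x, ρ (x, T) * Real.log (ρ (x, T)) : ℝ) : EReal)
          - ((∫ x, ρ (x, 0) * Real.log (ρ (x, 0)) : ℝ) : EReal)) := by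
  obtain ⟨K, hK, hvK⟩ := hvK
  obtain ⟨g, hg, hdom⟩ := hdom
  have hentropy : (∫ x, ρ (x, T) * Real.log (ρ (x, T))) - ∫ x, ρ (x, 0) * Real.log (ρ (x, 0))
      = ∫ t in Set.Icc (0:ℝ) T,
          ∫ x, ∑ i, fderiv ℝ (fun y => ρ (y, t)) x (Pi.single i 1) * v (x, t) i := by
    rw [integral_mul_log_sub_eq_integral_derivWithin hT hρC1 hρpos (hent 0 ⟨le_rfl, hT.le⟩)
      (hent T ⟨hT.le, le_rfl⟩) hg hdom]
    refine setIntegral_congr_fun measurableSet_Icc fun t ht => ?_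
    rw [← integral_neg_divergence_mul_log_add_one (hρC1.contDiff_slice ht)
      (fun x => hρpos x t ht) (hvC1.contDiff_slice ht)
      (HasCompactSupport.intro hK fun x hx => hvK x hx t ht)]
    simp_rw [eq_neg_of_add_eq_zero_left (hcont _ t ht)]
  refine ⟨hentropy, ?_⟩
  rw [coe_lintegral_sq_add_mul_eq isCompact_Icc (uniqueDiffOn_Icc hT) hK hρC1 hρpos
    hvC1.continuousOn hvK, ← hentropy, EReal.add_coe_sub]

/-- Integration-by-parts identity for the Boltzmann entropy along a solution of the
continuity equation: if `ρ : ℝ^d × [0,T] → (0,∞)` is a `C¹` probability density with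
integrable `ρ log ρ`, `v` is a `C¹` vector field vanishing in space outside a compact set,
the continuity equation `∂ₜρ + div(ρ v) = 0` holds pointwise and a domination condition
holds, then `H(ρ(·,T)) - H(ρ(·,0)) = ∫₀ᵀ ∫ ∇ₓρ · v dx dt`; equivalently, with
`u = ∇ρ/(2ρ)`, one has
`∫₀ᵀ ∫ |u+v|² ρ = ∫₀ᵀ ∫ (|u|² + |v|²) ρ + H(ρ(·,T)) - H(ρ(·,0))`. -/
theorem entropy_integration_by_parts
    (d : ℕ) (T : ℝ) (hT : 0 < T)
    (ρ : (Fin d → ℝ) × ℝ → ℝ) (v : (Fin d → ℝ) × ℝ → (Fin d → ℝ))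
    (hρC1 : ContDiffOn ℝ 1 ρ (Set.univ ×ˢ Set.Icc 0 T))
    (hρpos : ∀ (x : Fin d → ℝ), ∀ t ∈ Set.Icc (0:ℝ) T, 0 < ρ (x, t))
    (hρint : ∀ t ∈ Set.Icc (0:ℝ) T, Integrable (fun x => ρ (x, t)))
    (hρprob : ∀ t ∈ Set.Icc (0:ℝ) T, ∫ x, ρ (x, t) = 1)
    (hent : ∀ t ∈ Set.Icc (0:ℝ) T, Integrable (fun x => ρ (x, t) * Real.log (ρ (x, t))))
    (hvC1 : ContDiffOn ℝ 1 v (Set.univ ×ˢ Set.Icc 0 T))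
    (hvK : ∃ K : Set (Fin d → ℝ), IsCompact K ∧
      ∀ x ∉ K, ∀ t ∈ Set.Icc (0:ℝ) T, v (x, t) = 0)
    (hcont : ∀ (x : Fin d → ℝ), ∀ t ∈ Set.Icc (0:ℝ) T,
      derivWithin (fun s => ρ (x, s)) (Set.Icc 0 T) t
        + ∑ i, fderiv ℝ (fun y => ρ (y, t) * v (y, t) i) x (Pi.single i 1) = 0)
    (hdom : ∃ g : (Fin d → ℝ) → ℝ, Integrable g ∧
      ∀ (x : Fin d → ℝ), ∀ t ∈ Set.Icc (0:ℝ) T,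
        |derivWithin (fun s => ρ (x, s)) (Set.Icc 0 T) t| * (1 + |Real.log (ρ (x, t))|)
          ≤ g x) :
    ((∫ x, ρ (x, T) * Real.log (ρ (x, T))) - ∫ x, ρ (x, 0) * Real.log (ρ (x, 0))
        = ∫ t in Set.Icc (0:ℝ) T,
            ∫ x, ∑ i, fderiv ℝ (fun y => ρ (y, t)) x (Pi.single i 1) * v (x, t) i)
    ∧ (((∫⁻ t in Set.Icc (0:ℝ) T, ∫⁻ x, ENNReal.ofReal
            ((∑ i, (fderiv ℝ (fun y => ρ (y, t)) x (Pi.single i 1) / (2 * ρ (x, t))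
                + v (x, t) i) ^ 2) * ρ (x, t)) : ℝ≥0∞) : EReal)
        = ((∫⁻ t in Set.Icc (0:ℝ) T, ∫⁻ x, ENNReal.ofReal
            ((∑ i, ((fderiv ℝ (fun y => ρ (y, t)) x (Pi.single i 1) / (2 * ρ (x, t))) ^ 2
                + v (x, t) i ^ 2)) * ρ (x, t)) : ℝ≥0∞) : EReal)
          + ((∫ x, ρ (x, T) * Real.log (ρ (x, T)) : ℝ) : EReal)
          - ((∫ x, ρ (x, 0) * Real.log (ρ (x, 0)) : ℝ) : EReal)) :=
  entropy_integration_by_parts_general d T hT ρ v hρC1 hρpos hent hvC1 hvK hcont hdom
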